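/- Let n be a positive integer, C ⊆ ℝ^n a nonempty, compact, connected set such that every ball around a point of C meets C in a set of positive Lebesgue measure (i.e. for all x ∈ C and δ > 0, vol(C ∩ B(x,δ)) > 0), and let f : ℝ^n → ℝ be continuous. Let (Ω, ℱ, ℙ) be a probability space, (ℱ_k) a filtration, and (x_k)_{k≥1} an adapted sequence of random vectors taking values in C almost surely. Suppose there exist constants β > 0 and r > 0 such that for every k and every Borel set Σ ⊆ ℝ^n, almost surely ℙ(x_{k+1} ∈ Σ | ℱ_k) ≥ β · vol(Σ ∩ C ∩ B(x_k, r)), where vol denotes n-dimensional Lebesgue measure and B(x,r) the Euclidean ball of radius r about x. Then the running minimum y_k := min_{1 ≤ j ≤ k} f(x_j) converges almost surely to min_{x ∈ C} f(x). -/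

import Mathlib

/-!
Fix a target `T = C ∩ B(x*, δ)` around a minimiser `x*` of `f`. Call `A` *uniformly reachable
from `B` in `j` steps* if, conditionally on any past event on which `x_k ∈ B`, the event
`x_{k+j} ∈ A` has probability at least some fixed `q > 0`. The transition bound gives such
one-step estimates between overlapping balls, these compose, and connectedness of `C` chains
them from every ball of radius `r/4` about a point of `C` to `T`; compactness makes the
estimate uniform over `C`. Then the probability of having avoided `T` up to time `k` decreases
by a fixed factor every `j` steps, so `T` is visited almost surely.
-/

open MeasureTheory Filter Metric Topology

section UniformlyReaches

variable {Ω E : Type*} {m0 : MeasurableSpace Ω}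
  {μ : Measure Ω} {ℱ : Filtration ℕ m0} {x : ℕ → Ω → E} {A B D : Set E} {j l : ℕ}

def UniformlyReaches (μ : Measure Ω) (ℱ : Filtration ℕ m0) (x : ℕ → Ω → E) (B A : Set E)
    (j : ℕ) : Prop :=
  ∃ q > 0, ∀ k (F : Set Ω), MeasurableSet[ℱ k] F → (∀ᵐ ω ∂μ, ω ∈ F → x k ω ∈ B) →
    q * μ.real F ≤ μ.real (F ∩ x (k + j) ⁻¹' A)

theorem uniformlyReaches_empty (A : Set E) (j : ℕ) : UniformlyReaches μ ℱ x ∅ A j := by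
  refine ⟨1, one_pos, fun k F _ hF => ?_⟩
  have hF₀ : μ F = 0 := measure_eq_zero_iff_ae_notMem.2 (hF.mono fun _ h hω => h hω)
  simp [measureReal_def, hF₀]

theorem UniformlyReaches.mono [IsFiniteMeasure μ] {A' B' : Set E}
    (h : UniformlyReaches μ ℱ x B A j) (hB : B' ⊆ B) (hA : A ⊆ A') :
    UniformlyReaches μ ℱ x B' A' j := by
  obtain ⟨q, hq, h⟩ := h
  refine ⟨q, hq, fun k F hF hFB => (h k F hF ?_).trans (measureReal_mono ?_)⟩
  · filter_upwards [hFB] with ω hω hωF using hB (hω hωF)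
  · exact Set.inter_subset_inter_right _ (Set.preimage_mono hA)

variable [MeasurableSpace E]

theorem UniformlyReaches.trans [IsFiniteMeasure μ] (hadp : Adapted ℱ x) (hA : MeasurableSet A)
    (h₁ : UniformlyReaches μ ℱ x B A j) (h₂ : UniformlyReaches μ ℱ x A D l) :
    UniformlyReaches μ ℱ x B D (j + l) := by
  obtain ⟨q, hq, h₁⟩ := h₁
  obtain ⟨p, hp, h₂⟩ := h₂
  refine ⟨p * q, mul_pos hp hq, fun k F hF hFB => ?_⟩
  have hF' : MeasurableSet[ℱ (k + j)] (F ∩ x (k + j) ⁻¹' A) :=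
    (ℱ.mono (Nat.le_add_right k j) _ hF).inter (hadp _ hA)
  calc p * q * μ.real F = p * (q * μ.real F) := mul_assoc _ _ _
    _ ≤ p * μ.real (F ∩ x (k + j) ⁻¹' A) := mul_le_mul_of_nonneg_left (h₁ k F hF hFB) hp.le
    _ ≤ μ.real (F ∩ x (k + j) ⁻¹' A ∩ x (k + j + l) ⁻¹' D) :=
        h₂ _ _ hF' (ae_of_all _ fun _ hω => hω.2)
    _ ≤ μ.real (F ∩ x (k + (j + l)) ⁻¹' D) := by
        rw [← add_assoc]
        exact measureReal_mono (Set.inter_subset_inter_left _ Set.inter_subset_left)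

theorem UniformlyReaches.union [IsFiniteMeasure μ] {B₁ B₂ : Set E} (hadp : Adapted ℱ x)
    (hB₁ : MeasurableSet B₁) (h₁ : UniformlyReaches μ ℱ x B₁ A j)
    (h₂ : UniformlyReaches μ ℱ x B₂ A j) : UniformlyReaches μ ℱ x (B₁ ∪ B₂) A j := by
  obtain ⟨q₁, hq₁, h₁⟩ := h₁
  obtain ⟨q₂, hq₂, h₂⟩ := h₂
  refine ⟨min q₁ q₂, lt_min hq₁ hq₂, fun k F hF hFB => ?_⟩
  have hS : MeasurableSet[ℱ k] (x k ⁻¹' B₁) := hadp k hB₁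
  set X := x (k + j) ⁻¹' A
  have hF₁ := h₁ k _ (hF.inter hS) (ae_of_all _ fun _ hω => hω.2)
  have hF₂ := h₂ k _ (hF.diff hS) (by
    filter_upwards [hFB] with ω h hω using (h hω.1).resolve_left hω.2)
  calc min q₁ q₂ * μ.real F
      = min q₁ q₂ * μ.real (F ∩ x k ⁻¹' B₁) + min q₁ q₂ * μ.real (F \ x k ⁻¹' B₁) := by
        rw [← mul_add, measureReal_inter_add_sdiff (ℱ.le k _ hS)]
    _ ≤ μ.real (F ∩ x k ⁻¹' B₁ ∩ X) + μ.real (F \ x k ⁻¹' B₁ ∩ X) := by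
        gcongr
        · exact (mul_le_mul_of_nonneg_right (min_le_left _ _) measureReal_nonneg).trans hF₁
        · exact (mul_le_mul_of_nonneg_right (min_le_right _ _) measureReal_nonneg).trans hF₂
    _ = μ.real (F ∩ X) := by
        rw [Set.inter_right_comm, ← Set.inter_sdiff_right_comm,
          measureReal_inter_add_sdiff (ℱ.le k _ hS)]

theorem UniformlyReaches.eventually_atTop [IsFiniteMeasure μ] (hadp : Adapted ℱ x)
    (hA : MeasurableSet A) (h : UniformlyReaches μ ℱ x B A j)
    (hloop : UniformlyReaches μ ℱ x A A 1) : ∀ᶠ l in atTop, UniformlyReaches μ ℱ x B A l := by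
  have hpad : ∀ i, UniformlyReaches μ ℱ x B A (j + i) := by
    intro i
    induction i with
    | zero => exact h
    | succ i ih => rw [← add_assoc]; exact ih.trans hadp hA hloop
  filter_upwards [eventually_ge_atTop j] with l hl
  simpa [Nat.add_sub_cancel' hl] using hpad (l - j)

theorem UniformlyReaches.ae_exists_mem [IsFiniteMeasure μ] {C T : Set E} (hadp : Adapted ℱ x)
    (hT : MeasurableSet T) (h : UniformlyReaches μ ℱ x C T j) (hxC : ∀ k, ∀ᵐ ω ∂μ, x k ω ∈ C) :
    ∀ᵐ ω ∂μ, ∃ k, x k ω ∈ T := by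
  obtain ⟨q, hq, h⟩ := h
  set N : ℕ → Set Ω := fun k => ⋂ i ≤ k, x i ⁻¹' Tᶜ
  have hN : ∀ k, MeasurableSet[ℱ k] (N k) := fun k =>
    MeasurableSet.iInter fun i => MeasurableSet.iInter fun hi => ℱ.mono hi _ (hadp i hT.compl)
  have hN_anti : Antitone N := fun k k' hk =>
    Set.biInter_subset_biInter_left fun i (hi : i ≤ k) => hi.trans hk
  have hdecay : ∀ k, q * μ.real (N k) ≤ μ.real (N k) - μ.real (N (k + j)) := by
    intro k
    calc q * μ.real (N k) ≤ μ.real (N k ∩ x (k + j) ⁻¹' T) :=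
          h k _ (hN k) (by filter_upwards [hxC k] with ω hω _ using hω)
      _ ≤ μ.real (N k \ N (k + j)) := measureReal_mono fun ω hω =>
          ⟨hω.1, fun hω' => Set.mem_iInter₂.1 hω' (k + j) le_rfl hω.2⟩
      _ = μ.real (N k) - μ.real (N (k + j)) :=
          measureReal_sdiff (hN_anti (Nat.le_add_right k j)) (ℱ.le _ _ (hN _))
  have hlim := tendsto_atTop_ciInf (fun k k' hk => measureReal_mono (μ := μ) (hN_anti hk))
    ⟨0, Set.forall_mem_range.2 fun _ => measureReal_nonneg⟩
  have hdiff : Tendsto (fun k => μ.real (N k) - μ.real (N (k + j))) atTop (𝓝 0) := by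
    simpa using hlim.sub (hlim.comp (tendsto_add_atTop_nat j))
  have hnever : μ.real (⋂ k, x k ⁻¹' Tᶜ) = 0 := by
    refine le_antisymm ?_ measureReal_nonneg
    refine nonpos_of_mul_nonpos_right ?_ hq
    refine ge_of_tendsto hdiff (Eventually.of_forall fun k => le_trans ?_ (hdecay k))
    exact mul_le_mul_of_nonneg_left
      (measureReal_mono (Set.subset_iInter₂ fun i _ => Set.iInter_subset _ i)) hq.le
  filter_upwards [measure_eq_zero_iff_ae_notMem.1 ((measureReal_eq_zero_iff).1 hnever)]
    with ω hω
  simpa using hω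

end UniformlyReaches

section Transition

variable {Ω E : Type*} {m0 : MeasurableSpace Ω} [MetricSpace E] [MeasurableSpace E]
  {μ : Measure Ω} {ℱ : Filtration ℕ m0} {x : ℕ → Ω → E}
  {ν : Measure E} {C : Set E} {β r : ℝ}

def HasTransitionLowerBound (μ : Measure Ω) (ℱ : Filtration ℕ m0) (x : ℕ → Ω → E)
    (ν : Measure E) (C : Set E) (β r : ℝ) : Prop :=
  ∀ k, ∀ S : Set E, MeasurableSet S → ∀ᵐ ω ∂μ,
    β * (ν (S ∩ C ∩ ball (x k ω) r)).toReal ≤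
      (μ[Set.indicator (x (k + 1) ⁻¹' S) (fun _ => (1 : ℝ)) | ℱ k]) ω

theorem HasTransitionLowerBound.uniformlyReaches_one [IsFiniteMeasure μ] {A B : Set E}
    (htrans : HasTransitionLowerBound μ ℱ x ν C β r) (hadp : Adapted ℱ x) (hβ : 0 < β)
    (hA : MeasurableSet A) (hAC : A ⊆ C) (hA₀ : 0 < ν A) (hA_top : ν A ≠ ⊤)
    (hBA : ∀ y ∈ B, A ⊆ ball y r) : UniformlyReaches μ ℱ x B A 1 := by
  refine ⟨β * (ν A).toReal, mul_pos hβ (ENNReal.toReal_pos hA₀.ne' hA_top),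
    fun k F hF hFB => ?_⟩
  have hpre : MeasurableSet (x (k + 1) ⁻¹' A) := ℱ.le (k + 1) _ (hadp (k + 1) hA)
  have hbound : ∀ᵐ ω ∂μ.restrict F, β * (ν A).toReal ≤
      (μ[(x (k + 1) ⁻¹' A).indicator (fun _ => (1 : ℝ)) | ℱ k]) ω := by
    filter_upwards [ae_restrict_of_ae (htrans k A hA), ae_restrict_of_ae hFB,
      ae_restrict_mem (ℱ.le k F hF)] with ω hω hωB hωF
    rwa [Set.inter_eq_left.2 hAC, Set.inter_eq_left.2 (hBA _ (hωB hωF))] at hω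
  calc β * (ν A).toReal * μ.real F = ∫ _ in F, β * (ν A).toReal ∂μ := by
        rw [setIntegral_const, smul_eq_mul, mul_comm]
    _ ≤ ∫ ω in F, (μ[(x (k + 1) ⁻¹' A).indicator (fun _ => (1 : ℝ)) | ℱ k]) ω ∂μ :=
        setIntegral_mono_ae_restrict (integrableOn_const (measure_ne_top μ F))
          integrable_condExp.integrableOn hbound
    _ = ∫ ω in F, (x (k + 1) ⁻¹' A).indicator (fun _ => (1 : ℝ)) ω ∂μ :=
        setIntegral_condExp (ℱ.le k) ((integrable_const (1 : ℝ)).indicator hpre) hF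
    _ = μ.real (F ∩ x (k + 1) ⁻¹' A) := by
        rw [setIntegral_indicator hpre, setIntegral_const, smul_eq_mul, mul_one]

variable [OpensMeasurableSpace E] [IsFiniteMeasure μ] [IsFiniteMeasureOnCompacts ν]

theorem HasTransitionLowerBound.eventually_uniformlyReaches_ball_of_dist_lt
    (htrans : HasTransitionLowerBound μ ℱ x ν C β r) (hadp : Adapted ℱ x) (hβ : 0 < β)
    (hC_cpt : IsCompact C) (hC_pos : ∀ x ∈ C, ∀ δ : ℝ, 0 < δ → 0 < ν (C ∩ ball x δ))
    {T : Set E} {a b : E} (hb : b ∈ C) (hab : dist a b < r / 4)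
    (h : ∀ᶠ j in atTop, UniformlyReaches μ ℱ x (ball b (r / 4)) T j) :
    ∀ᶠ j in atTop, UniformlyReaches μ ℱ x (ball a (r / 4)) T j := by
  have hAm : MeasurableSet (C ∩ ball b (r / 4)) :=
    hC_cpt.isClosed.measurableSet.inter measurableSet_ball
  have hab₁ : UniformlyReaches μ ℱ x (ball a (r / 4)) (C ∩ ball b (r / 4)) 1 :=
    htrans.uniformlyReaches_one hadp hβ hAm Set.inter_subset_left
      (hC_pos b hb _ (dist_nonneg.trans_lt hab))
      ((measure_mono Set.inter_subset_left).trans_lt hC_cpt.measure_lt_top).ne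
      fun w hw t ht => by
        have := dist_triangle4 t b a w
        rw [mem_ball] at hw ⊢
        linarith [dist_comm a w, dist_comm a b, mem_ball.1 ht.2, dist_nonneg (x := a) (y := b)]
  obtain ⟨N, hN⟩ := eventually_atTop.1 h
  filter_upwards [eventually_ge_atTop (N + 1)] with j hj
  simpa [show 1 + (j - 1) = j by omega] using
    hab₁.trans hadp hAm ((hN (j - 1) (by omega)).mono Set.inter_subset_right subset_rfl)

theorem HasTransitionLowerBound.eventually_uniformlyReaches_ball
    (htrans : HasTransitionLowerBound μ ℱ x ν C β r) (hadp : Adapted ℱ x) (hβ : 0 < β)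
    (hr : 0 < r) (hC_cpt : IsCompact C) (hC_conn : IsPreconnected C)
    (hC_pos : ∀ x ∈ C, ∀ δ : ℝ, 0 < δ → 0 < ν (C ∩ ball x δ)) {T : Set E}
    (hT : MeasurableSet T) (hTC : T ⊆ C) (hT₀ : 0 < ν T) {z : E} (hz : z ∈ C)
    (hTz : T ⊆ ball z (r / 4)) {y : E} (hy : y ∈ C) :
    ∀ᶠ j in atTop, UniformlyReaches μ ℱ x (ball y (r / 4)) T j := by
  have hT_one : ∀ B : Set E, (∀ w ∈ B, T ⊆ ball w r) → UniformlyReaches μ ℱ x B T 1 :=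
    fun B hB => htrans.uniformlyReaches_one hadp hβ hT hTC hT₀
      ((measure_mono hTC).trans_lt hC_cpt.measure_lt_top).ne hB
  have hTr : ∀ w ∈ ball z (r / 4), T ⊆ ball w r := fun w hw t ht => by
    have := dist_triangle t z w
    rw [mem_ball] at hw ⊢
    linarith [mem_ball.1 (hTz ht), dist_comm z w]
  have hz_reach : ∀ᶠ j in atTop, UniformlyReaches μ ℱ x (ball z (r / 4)) T j :=
    (hT_one _ hTr).eventually_atTop hadp hT (hT_one T fun w hw => hTr w (hTz hw))
  have hstep := fun {a b : E} => htrans.eventually_uniformlyReaches_ball_of_dist_lt (T := T)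
    (a := a) (b := b) hadp hβ hC_cpt hC_pos
  refine hC_conn.induction₂'
    (fun a b => (∀ᶠ j in atTop, UniformlyReaches μ ℱ x (ball b (r / 4)) T j) →
      ∀ᶠ j in atTop, UniformlyReaches μ ℱ x (ball a (r / 4)) T j)
    (fun a ha => ?_) (fun _ _ _ _ _ _ h₁ h₂ h => h₁ (h₂ h)) hy hz hz_reach
  filter_upwards [self_mem_nhdsWithin,
    mem_nhdsWithin_of_mem_nhds (ball_mem_nhds a (by positivity : 0 < r / 4))] with b hb hab
  exact ⟨hstep hb (by rwa [mem_ball, dist_comm] at hab), hstep ha (mem_ball.1 hab)⟩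

theorem HasTransitionLowerBound.eventually_uniformlyReaches
    (htrans : HasTransitionLowerBound μ ℱ x ν C β r) (hadp : Adapted ℱ x) (hβ : 0 < β)
    (hr : 0 < r) (hC_cpt : IsCompact C) (hC_conn : IsPreconnected C)
    (hC_pos : ∀ x ∈ C, ∀ δ : ℝ, 0 < δ → 0 < ν (C ∩ ball x δ)) {T : Set E}
    (hT : MeasurableSet T) (hTC : T ⊆ C) (hT₀ : 0 < ν T) {z : E} (hz : z ∈ C)
    (hTz : T ⊆ ball z (r / 4)) :
    ∀ᶠ j in atTop, UniformlyReaches μ ℱ x C T j := by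
  obtain ⟨U, -, hCU, hU⟩ : ∃ U, MeasurableSet U ∧ C ⊆ U ∧
      ∀ᶠ j in atTop, UniformlyReaches μ ℱ x U T j := by
    refine hC_cpt.induction_on ⟨∅, MeasurableSet.empty, subset_rfl,
      Eventually.of_forall fun j => uniformlyReaches_empty T j⟩
      (fun _ _ hst ⟨U, hU, htU, h⟩ => ⟨U, hU, hst.trans htU, h⟩)
      (fun _ _ ⟨U₁, hU₁, hsU₁, h₁⟩ ⟨U₂, hU₂, htU₂, h₂⟩ => ⟨U₁ ∪ U₂, hU₁.union hU₂,
        Set.union_subset_union hsU₁ htU₂, (h₁.and h₂).mono fun _ h => h.1.union hadp hU₁ h.2⟩)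
      fun y hy => ⟨ball y (r / 4), mem_nhdsWithin_of_mem_nhds (ball_mem_nhds y (by positivity)),
        ball y (r / 4), measurableSet_ball, subset_rfl,
        htrans.eventually_uniformlyReaches_ball hadp hβ hr hC_cpt hC_conn hC_pos hT hTC hT₀ hz
          hTz hy⟩
  exact hU.mono fun _ h => h.mono hCU subset_rfl

theorem HasTransitionLowerBound.ae_exists_lt_sInf_add
    (htrans : HasTransitionLowerBound μ ℱ x ν C β r) (hadp : Adapted ℱ x) (hβ : 0 < β)
    (hr : 0 < r) (hC_ne : C.Nonempty) (hC_cpt : IsCompact C) (hC_conn : IsPreconnected C)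
    (hC_pos : ∀ x ∈ C, ∀ δ : ℝ, 0 < δ → 0 < ν (C ∩ ball x δ))
    (hxC : ∀ k, ∀ᵐ ω ∂μ, x k ω ∈ C) {f : E → ℝ} (hf : Continuous f) {ε : ℝ} (hε : 0 < ε) :
    ∀ᵐ ω ∂μ, ∃ k, f (x k ω) < sInf (f '' C) + ε := by
  obtain ⟨z, hz, hfz⟩ := (hC_cpt.image hf).sInf_mem (hC_ne.image f)
  obtain ⟨δ, hδ, hδf⟩ := Metric.isOpen_iff.1 (isOpen_lt hf continuous_const) z
    (show f z < sInf (f '' C) + ε by linarith)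
  set T := C ∩ ball z (min δ (r / 4))
  have hT : MeasurableSet T := hC_cpt.isClosed.measurableSet.inter measurableSet_ball
  obtain ⟨j, hj⟩ := (htrans.eventually_uniformlyReaches hadp hβ hr hC_cpt hC_conn hC_pos hT
    Set.inter_subset_left (hC_pos z hz _ (lt_min hδ (by positivity))) hz
    (Set.inter_subset_right.trans (ball_subset_ball (min_le_right _ _)))).exists
  filter_upwards [hj.ae_exists_mem hadp hT hxC] with ω ⟨k, hk⟩
  exact ⟨k, hδf (ball_subset_ball (min_le_left _ _) hk.2)⟩

end Transition

theorem tendsto_inf'_range_of_forall_lt_add {u : ℕ → ℝ} {m : ℝ} (hm : ∀ j, m ≤ u j)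
    (h : ∀ ε > 0, ∃ j, u j < m + ε) :
    Tendsto (fun k => (Finset.range (k + 1)).inf' Finset.nonempty_range_add_one u) atTop (𝓝 m) := by
  refine tendsto_order.2 ⟨fun a ha => Eventually.of_forall fun k =>
    ha.trans_le (Finset.le_inf' _ _ fun j _ => hm j), fun a ha => ?_⟩
  obtain ⟨j, hj⟩ := h (a - m) (sub_pos.2 ha)
  filter_upwards [eventually_ge_atTop j] with k hk
  exact (Finset.inf'_le _ (Finset.mem_range.2 (Nat.lt_succ_of_le hk))).trans_lt (by linarith)

theorem stmt_3_general (n : ℕ)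
    (C : Set (EuclideanSpace ℝ (Fin n)))
    (hC_ne : C.Nonempty) (hC_cpt : IsCompact C) (hC_conn : IsConnected C)
    (hC_pos : ∀ x ∈ C, ∀ δ : ℝ, 0 < δ →
      0 < MeasureTheory.volume (C ∩ Metric.ball x δ))
    (f : EuclideanSpace ℝ (Fin n) → ℝ) (hf : Continuous f)
    {Ω : Type*} {m0 : MeasurableSpace Ω} (μ : Measure Ω)
    [IsProbabilityMeasure μ] (ℱ : Filtration ℕ m0)
    (x : ℕ → Ω → EuclideanSpace ℝ (Fin n))
    (hadp : Adapted ℱ x)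
    (hxC : ∀ k, ∀ᵐ ω ∂μ, x k ω ∈ C)
    (β r : ℝ) (hβ : 0 < β) (hr : 0 < r)
    (htrans : ∀ k, ∀ S : Set (EuclideanSpace ℝ (Fin n)), MeasurableSet S →
      ∀ᵐ ω ∂μ,
        β * (MeasureTheory.volume (S ∩ C ∩ Metric.ball (x k ω) r)).toReal ≤
          (μ[Set.indicator ((x (k + 1)) ⁻¹' S) (fun _ => (1 : ℝ)) | ℱ k]) ω) :
    ∀ᵐ ω ∂μ,
      Tendsto
        (fun k : ℕ =>
          (Finset.range (k + 1)).inf' Finset.nonempty_range_add_one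
            (fun j => f (x j ω)))
        atTop (nhds (sInf (f '' C))) := by
  have htrans' : HasTransitionLowerBound μ ℱ x volume C β r := htrans
  have hnear : ∀ p : ℕ, ∀ᵐ ω ∂μ, ∃ k, f (x k ω) < sInf (f '' C) + 1 / (p + 1) := fun p =>
    htrans'.ae_exists_lt_sInf_add hadp hβ hr hC_ne hC_cpt hC_conn.isPreconnected hC_pos hxC hf
      (by positivity)
  filter_upwards [ae_all_iff.2 hnear, ae_all_iff.2 hxC] with ω hω hωC
  refine tendsto_inf'_range_of_forall_lt_add
    (fun j => csInf_le (hC_cpt.image hf).bddBelow ⟨_, hωC j, rfl⟩) fun ε hε => ?_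
  obtain ⟨p, hp⟩ := exists_nat_one_div_lt hε
  obtain ⟨k, hk⟩ := hω p
  exact ⟨k, hk.trans (by linarith)⟩

/-- Theorem 2 (Global Optimisation): for an adapted sequence of random points
of a nonempty compact connected set `C ⊆ ℝⁿ` (every ball about a point of `C`
meeting `C` in positive Lebesgue measure), whose one-step transition
probabilities conditioned on the past are bounded below by `β` times the
Lebesgue volume on an `r`-neighbourhood of the current point intersected with
`C`, the running minimum of a continuous `f` along the sequence converges
almost surely to the global minimum of `f` over `C`. -/
theorem stmt_3 (n : ℕ) (hn : 0 < n)
    (C : Set (EuclideanSpace ℝ (Fin n)))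
    (hC_ne : C.Nonempty) (hC_cpt : IsCompact C) (hC_conn : IsConnected C)
    (hC_pos : ∀ x ∈ C, ∀ δ : ℝ, 0 < δ →
      0 < MeasureTheory.volume (C ∩ Metric.ball x δ))
    (f : EuclideanSpace ℝ (Fin n) → ℝ) (hf : Continuous f)
    {Ω : Type*} {m0 : MeasurableSpace Ω} (μ : Measure Ω)
    [IsProbabilityMeasure μ] (ℱ : Filtration ℕ m0)
    (x : ℕ → Ω → EuclideanSpace ℝ (Fin n))
    (hadp : Adapted ℱ x)
    (hxC : ∀ k, ∀ᵐ ω ∂μ, x k ω ∈ C)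
    (β r : ℝ) (hβ : 0 < β) (hr : 0 < r)
    (htrans : ∀ k, ∀ S : Set (EuclideanSpace ℝ (Fin n)), MeasurableSet S →
      ∀ᵐ ω ∂μ,
        β * (MeasureTheory.volume (S ∩ C ∩ Metric.ball (x k ω) r)).toReal ≤
          (μ[Set.indicator ((x (k + 1)) ⁻¹' S) (fun _ => (1 : ℝ)) | ℱ k]) ω) :
    ∀ᵐ ω ∂μ,
      Tendsto
        (fun k : ℕ =>
          (Finset.range (k + 1)).inf' Finset.nonempty_range_add_one
            (fun j => f (x j ω)))
        atTop (nhds (sInf (f '' C))) :=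
  stmt_3_general n C hC_ne hC_cpt hC_conn hC_pos f hf μ ℱ x hadp hxC β r hβ hr htrans
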